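/- For all k ≥ 2, the polynomial Ẽ_k(u) := E_k(u − 1/2) in the shifted variable u = λ + 1/2 is even: Ẽ_k(−u) = Ẽ_k(u). -/
import Mathlib

open Polynomial

noncomputable def euclidPolyQ : ℕ → Polynomial ℚ
  | 0 => X + 1
  | k + 1 => euclidPolyQ k * (euclidPolyQ k - 1) + 1

/-- For k ≥ 2 the shifted polynomial `Ẽ_k(u) = E_k(u − 1/2)` is even
(0-indexed: `euclidPolyQ k` is the paper's `E_{k+1}`, so take `1 ≤ k`). -/
theorem euclidPolyQ_shift_even (k : ℕ) (hk : 1 ≤ k) :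
    ((euclidPolyQ k).comp (X - C (1 / 2))).comp (-X)
      = (euclidPolyQ k).comp (X - C (1 / 2)) := by
  induction k with
  | zero => omega
  | succ n ih =>
    rcases Nat.eq_or_lt_of_le hk with h | h
    · obtain rfl : n = 0 := by omega
      simp only [euclidPolyQ, add_comp, mul_comp, sub_comp, one_comp, X_comp, C_comp, neg_comp]
      have h2 : C (1/2 : ℚ) * 2 = 1 := by
        rw [show (2 : ℚ[X]) = C 2 from (map_ofNat C 2).symm, ← C_mul]
        norm_num
      linear_combination (2 * X : ℚ[X]) * h2
    · have ih' := ih (by omega)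
      simp only [euclidPolyQ, add_comp, mul_comp, sub_comp, one_comp, ih']
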